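/- Let z ∈ ℂ and let {a_n}, {z_n} be an infinite continued fraction expansion and iteration sequence of z over the Eisenstein integers 𝔈 with respect to a nearest integer algorithm, with Q-pair {p_n}, {q_n}. Suppose M > 0 is such that |a_n| ≤ M for all n ≥ 0. Then for all p, q ∈ 𝔈 with q ≠ 0, |z − p/q| ≥ (1/(2(M + 2)²))·|q|⁻². -/

import Mathlib

/-!
Write `eₙ = pₙ - z qₙ`. The recursions give `eₙ₊₁ = -(zₙ - aₙ) eₙ`, and `|zₙ - aₙ| ≤ 1/√3`
(the covering radius of `𝔈`), so `eₙ` decays geometrically, while `|eₙ| ≤ (M + 1) |eₙ₊₁|`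
since `|zₙ₊₁| ≤ M + 1`. Given `x / y`, pick `m` with `|eₘ₊₁| < 1 / (2|y|) ≤ |eₘ|` and write
`(x, y) = u (pₘ, qₘ) + v (pₘ₊₁, qₘ₊₁)` with `u, v ∈ 𝔈`, which is possible as the determinant
is `±1`. If `u = 0` then `|x - z y| = |v| |eₘ₊₁| ≥ |eₘ₊₁|`. Otherwise
`|eₘ| ≤ |x - z y| + |v| |eₘ₊₁|`, and bounding `|v|` with the invariant `|qₙ eₙ| ≤ 1` (kept
along the recursion because `1/√3 + 1/3 ≤ 1`) gives `|eₘ| ≤ 4 |x - z y|`. Either way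
`|x - z y| ≥ 1 / (2 max (M + 1) 4 |y|)`, and `max (M + 1) 4 ≤ (M + 2)²`.
-/

open Complex

/-- The primitive cube root of unity ω = (−1 + √3·i)/2. -/
noncomputable def eisOmega : ℂ := (-1 + Real.sqrt 3 * Complex.I) / 2

/-- `a : ℂ` is an Eisenstein integer: `a = x + y·ω` with `x, y ∈ ℤ`. -/
def IsEis (a : ℂ) : Prop := ∃ x y : ℤ, a = (x : ℂ) + (y : ℂ) * eisOmega

theorem eisOmega_re : eisOmega.re = -1 / 2 := by simp [eisOmega]

theorem eisOmega_im : eisOmega.im = √3 / 2 := by simp [eisOmega]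

theorem eisOmega_sq : eisOmega ^ 2 = -1 - eisOmega := by
  have h : ((√3 : ℝ) : ℂ) ^ 2 = 3 := by norm_cast; simp
  unfold eisOmega
  linear_combination (I ^ 2 / 4) * h + (3 / 4 : ℂ) * I_sq

def eisSubring : Subring ℂ where
  carrier := {a | IsEis a}
  mul_mem' := by
    rintro _ _ ⟨x, y, rfl⟩ ⟨x', y', rfl⟩
    refine ⟨x * x' - y * y', x * y' + y * x' - y * y', ?_⟩
    push_cast
    linear_combination ((y : ℂ) * y') * eisOmega_sq
  one_mem' := ⟨1, 0, by simp⟩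
  add_mem' := by
    rintro _ _ ⟨x, y, rfl⟩ ⟨x', y', rfl⟩
    exact ⟨x + x', y + y', by push_cast; ring⟩
  zero_mem' := ⟨0, 0, by simp⟩
  neg_mem' := by
    rintro _ ⟨x, y, rfl⟩
    exact ⟨-x, -y, by push_cast; ring⟩

theorem normSq_add_mul_eisOmega (x y : ℝ) :
    normSq (x + y * eisOmega) = x ^ 2 - x * y + y ^ 2 := by
  simp only [normSq_apply, add_re, add_im, mul_re, mul_im, ofReal_re, ofReal_im,
    eisOmega_re, eisOmega_im]
  nlinarith [Real.sq_sqrt (show (0 : ℝ) ≤ 3 by norm_num)]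

theorem IsEis.one_le_norm {a : ℂ} (ha : IsEis a) (ha0 : a ≠ 0) : 1 ≤ ‖a‖ := by
  obtain ⟨x, y, rfl⟩ := ha
  have hsq : ‖(x : ℂ) + y * eisOmega‖ ^ 2 = ((x ^ 2 - x * y + y ^ 2 : ℤ) : ℝ) := by
    rw [Complex.sq_norm]; push_cast; exact_mod_cast normSq_add_mul_eisOmega x y
  have hpos : 0 < x ^ 2 - x * y + y ^ 2 := by
    exact_mod_cast hsq ▸ pow_pos (norm_pos_iff.mpr ha0) 2
  rw [← one_le_pow_iff_of_nonneg (norm_nonneg _) two_ne_zero, hsq]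
  exact_mod_cast hpos

theorem exists_eq_add_mul_eisOmega (w : ℂ) : ∃ x y : ℝ, w = x + y * eisOmega := by
  have hs : (√3 : ℝ) ≠ 0 := by positivity
  refine ⟨w.re + w.im / √3, 2 * w.im / √3, Complex.ext ?_ ?_⟩ <;>
    simp only [add_re, add_im, mul_re, mul_im, ofReal_re, ofReal_im, eisOmega_re,
      eisOmega_im] <;>
    field_simp <;> ring

/- For the form `s² - s t + t²` the diagonal cuts the unit square into two equilateral
triangles of side `1`; each is covered by the discs of radius `1/√3` around its vertices. -/
theorem exists_int_sq_sub_mul_add_sq_le_of_le {x y : ℝ} (hy : 0 ≤ y) (hyx : y ≤ x) (hx : x ≤ 1) :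
    ∃ m n : ℤ, (x - m) ^ 2 - (x - m) * (y - n) + (y - n) ^ 2 ≤ 1 / 3 := by
  rcases le_total (x + y) 1 with h₁ | h₁
  · rcases le_total (2 * x - y) 1 with h₂ | h₂
    · exact ⟨0, 0, by push_cast; nlinarith⟩
    · exact ⟨1, 0, by push_cast; nlinarith⟩
  · rcases le_total x (2 * y) with h₂ | h₂
    · exact ⟨1, 1, by push_cast; nlinarith⟩
    · exact ⟨1, 0, by push_cast; nlinarith⟩

theorem exists_int_sq_sub_mul_add_sq_le (x y : ℝ) :
    ∃ m n : ℤ, (x - m) ^ 2 - (x - m) * (y - n) + (y - n) ^ 2 ≤ 1 / 3 := by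
  suffices h : ∃ m n : ℤ, (Int.fract x - m) ^ 2 - (Int.fract x - m) * (Int.fract y - n)
      + (Int.fract y - n) ^ 2 ≤ 1 / 3 by
    obtain ⟨m, n, h⟩ := h
    refine ⟨⌊x⌋ + m, ⌊y⌋ + n, ?_⟩
    simp only [Int.fract] at h
    push_cast
    linarith
  rcases le_total (Int.fract y) (Int.fract x) with h | h
  · exact exists_int_sq_sub_mul_add_sq_le_of_le (Int.fract_nonneg _) h (Int.fract_lt_one _).le
  · obtain ⟨n, m, hnm⟩ :=
      exists_int_sq_sub_mul_add_sq_le_of_le (Int.fract_nonneg _) h (Int.fract_lt_one _).le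
    exact ⟨m, n, by linarith⟩

theorem exists_isEis_norm_sub_le (w : ℂ) : ∃ b, IsEis b ∧ ‖w - b‖ ≤ (√3)⁻¹ := by
  obtain ⟨x, y, rfl⟩ := exists_eq_add_mul_eisOmega w
  obtain ⟨m, n, h⟩ := exists_int_sq_sub_mul_add_sq_le x y
  refine ⟨m + n * eisOmega, ⟨m, n, rfl⟩, ?_⟩
  have hsq : ‖(x : ℂ) + y * eisOmega - (m + n * eisOmega)‖ ^ 2 ≤ (√3)⁻¹ ^ 2 := by
    have := normSq_add_mul_eisOmega (x - m) (y - n)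
    push_cast at this
    rw [Complex.sq_norm, show (x : ℂ) + y * eisOmega - (m + n * eisOmega)
      = ((x : ℂ) - m) + (y - n) * eisOmega by ring, this, inv_pow,
      Real.sq_sqrt (by norm_num)]
    linarith
  exact (pow_le_pow_iff_left₀ (norm_nonneg _) (by positivity) two_ne_zero).mp hsq

theorem inv_sqrt_three_mul_one_add_le_one : (√3)⁻¹ * (1 + (√3)⁻¹) ≤ (1 : ℝ) := by
  have h3 := Real.sq_sqrt (show (0 : ℝ) ≤ 3 by norm_num)
  have : √3 ≤ 2 := by nlinarith [Real.sqrt_nonneg 3]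
  rw [← one_div]
  field_simp
  nlinarith

section Recurrence

variable {R : Type*} [CommRing R] {a f g : ℕ → R}

theorem casoratian_eq (hf : ∀ n, f (n + 2) = a (n + 1) * f (n + 1) + f n)
    (hg : ∀ n, g (n + 2) = a (n + 1) * g (n + 1) + g n) (n : ℕ) :
    f (n + 1) * g n - f n * g (n + 1) = (-1) ^ n * (f 1 * g 0 - f 0 * g 1) := by
  induction n with
  | zero => ring
  | succ n ih =>
    rw [hf, hg, pow_succ]
    linear_combination (-1 : R) * ih

theorem Subring.mem_of_recurrence {S : Subring R} (ha : ∀ n, a n ∈ S) (h0 : f 0 ∈ S)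
    (h1 : f 1 ∈ S) (hf : ∀ n, f (n + 2) = a (n + 1) * f (n + 1) + f n) (n : ℕ) : f n ∈ S := by
  induction n using Nat.twoStepInduction with
  | zero => exact h0
  | one => exact h1
  | more n ih₀ ih₁ => rw [hf]; exact S.add_mem (S.mul_mem (ha _) ih₁) ih₀

end Recurrence

theorem succ_eq_neg_sub_mul_of_recurrence {K : Type*} [Field K] {a e zs : ℕ → K}
    (he : ∀ n, e (n + 2) = a (n + 1) * e (n + 1) + e n) (he1 : e 1 = -(zs 0 - a 0) * e 0)
    (hne : ∀ n, zs n ≠ a n) (hit : ∀ n, zs (n + 1) = (zs n - a n)⁻¹) (n : ℕ) :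
    e (n + 1) = -(zs n - a n) * e n := by
  induction n with
  | zero => exact he1
  | succ n ih =>
    have hw : zs n - a n ≠ 0 := sub_ne_zero.mpr (hne n)
    rw [he, ih, hit]
    field_simp
    ring

theorem Nat.exists_succ_lt_and_le {α : Type*} [LinearOrder α] {f : ℕ → α} {b : α}
    (h0 : b ≤ f 0) (h : ∃ n, f n < b) : ∃ m, f (m + 1) < b ∧ b ≤ f m := by
  by_contra! hcon
  obtain ⟨n, hn⟩ := h
  have : ∀ k, b ≤ f k := fun k => by
    induction k with
    | zero => exact h0
    | succ k ih => exact le_of_not_gt fun hk => (hcon k hk).not_ge ih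
  exact (this n).not_gt hn

theorem norm_eq_norm_mul_norm_succ {K : Type*} [NormedField K] {a e zs : ℕ → K}
    (hne : ∀ n, zs n ≠ a n) (hit : ∀ n, zs (n + 1) = (zs n - a n)⁻¹)
    (he : ∀ n, e (n + 1) = -(zs n - a n) * e n) (n : ℕ) :
    ‖e n‖ = ‖zs (n + 1)‖ * ‖e (n + 1)‖ := by
  rw [he, hit, norm_mul, norm_neg, norm_inv, ← mul_assoc,
    inv_mul_cancel₀ (norm_ne_zero_iff.2 (sub_ne_zero.2 (hne n))), one_mul]

section Approximation

variable {K : Type*} [NormedField K]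

theorem norm_mul_norm_le_one {q e : ℕ → K} {c : ℝ} (hc₀ : 0 ≤ c) (hc : c * (1 + c) ≤ 1)
    (hq0 : q 0 = 0) (hcross : ∀ n, ‖q (n + 1) * e n - q n * e (n + 1)‖ = 1)
    (hdecay : ∀ n, ‖e (n + 1)‖ ≤ c * ‖e n‖) (n : ℕ) : ‖q n‖ * ‖e n‖ ≤ 1 := by
  induction n with
  | zero => simp [hq0]
  | succ k ih =>
    have hk : ‖q (k + 1)‖ * ‖e k‖ ≤ 1 + ‖q k‖ * ‖e (k + 1)‖ := by
      rw [← norm_mul, ← norm_mul, ← hcross k]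
      exact norm_le_norm_sub_add _ _
    calc ‖q (k + 1)‖ * ‖e (k + 1)‖ ≤ c * (‖q (k + 1)‖ * ‖e k‖) := by
          rw [mul_left_comm]; gcongr; exact hdecay k
      _ ≤ c * (1 + c * (‖q k‖ * ‖e k‖)) := by
          gcongr
          calc _ ≤ 1 + ‖q k‖ * ‖e (k + 1)‖ := hk
            _ ≤ 1 + c * (‖q k‖ * ‖e k‖) := by rw [mul_left_comm]; gcongr; exact hdecay k
      _ ≤ c * (1 + c) := by gcongr; exact mul_le_of_le_one_right hc₀ ih
      _ ≤ 1 := hc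

theorem min_le_norm_sub_mul_of_sq_det_eq_one {S : Subring K}
    (hS : ∀ x ∈ S, x ≠ 0 → 1 ≤ ‖x‖) {p₀ p₁ q₀ q₁ : K} (hp₀ : p₀ ∈ S) (hp₁ : p₁ ∈ S)
    (hq₀ : q₀ ∈ S) (hq₁ : q₁ ∈ S) (hdet : (p₁ * q₀ - p₀ * q₁) ^ 2 = 1) {z : K}
    (hq₀e₁ : ‖q₀‖ * ‖p₁ - z * q₁‖ ≤ 1) {x y : K} (hx : x ∈ S) (hy : y ∈ S) (hy0 : y ≠ 0)
    (hye₁ : 2 * ‖y‖ * ‖p₁ - z * q₁‖ ≤ 1) :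
    min ‖p₁ - z * q₁‖ (‖p₀ - z * q₀‖ / 4) ≤ ‖x - z * y‖ := by
  set D := p₁ * q₀ - p₀ * q₁
  -- as `D⁻¹ = D`, these are the Cramer coordinates of `(x, y)` in the basis `(p₀, q₀), (p₁, q₁)`
  set u := D * (y * p₁ - x * q₁)
  set v := D * (x * q₀ - y * p₀)
  have hD : D ∈ S := S.sub_mem (S.mul_mem hp₁ hq₀) (S.mul_mem hp₀ hq₁)
  have huS : u ∈ S := S.mul_mem hD (S.sub_mem (S.mul_mem hy hp₁) (S.mul_mem hx hq₁))
  have hvS : v ∈ S := S.mul_mem hD (S.sub_mem (S.mul_mem hx hq₀) (S.mul_mem hy hp₀))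
  have hxy : x - z * y = u * (p₀ - z * q₀) + v * (p₁ - z * q₁) := by
    linear_combination (-(x - z * y)) * hdet
  have hv : ‖v‖ ≤ ‖q₀‖ * ‖x - z * y‖ + ‖y‖ * ‖p₀ - z * q₀‖ := by
    rw [norm_mul, (isOfFinOrder_iff_pow_eq_one.2 ⟨2, two_pos, hdet⟩).norm_eq_one, one_mul,
      ← norm_mul, ← norm_mul,
      show x * q₀ - y * p₀ = q₀ * (x - z * y) - y * (p₀ - z * q₀) by ring]
    exact norm_sub_le _ _
  rcases eq_or_ne u 0 with hu | hu
  · have hv0 : v ≠ 0 := by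
      rintro hv0
      apply hy0
      linear_combination (-y) * hdet + q₀ * hu + q₁ * hv0
    refine min_le_of_left_le ?_
    rw [hxy, hu, zero_mul, zero_add, norm_mul]
    exact le_mul_of_one_le_left (norm_nonneg _) (hS v hvS hv0)
  · refine min_le_of_right_le ?_
    have he₀ : ‖p₀ - z * q₀‖ ≤ ‖x - z * y‖ + ‖v‖ * ‖p₁ - z * q₁‖ := by
      calc ‖p₀ - z * q₀‖ ≤ ‖u‖ * ‖p₀ - z * q₀‖ :=
            le_mul_of_one_le_left (norm_nonneg _) (hS u huS hu)
        _ = ‖x - z * y - v * (p₁ - z * q₁)‖ := by rw [← norm_mul, hxy, add_sub_cancel_right]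
        _ ≤ _ := by rw [← norm_mul]; exact norm_sub_le _ _
    have hve₁ : ‖v‖ * ‖p₁ - z * q₁‖ ≤ ‖x - z * y‖ + ‖p₀ - z * q₀‖ / 2 := by
      calc ‖v‖ * ‖p₁ - z * q₁‖
          ≤ (‖q₀‖ * ‖x - z * y‖ + ‖y‖ * ‖p₀ - z * q₀‖) * ‖p₁ - z * q₁‖ := by gcongr
        _ = ‖q₀‖ * ‖p₁ - z * q₁‖ * ‖x - z * y‖
            + 2 * ‖y‖ * ‖p₁ - z * q₁‖ * (‖p₀ - z * q₀‖ / 2) := by ring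
        _ ≤ 1 * ‖x - z * y‖ + 1 * (‖p₀ - z * q₀‖ / 2) := by gcongr
        _ = _ := by ring
    linarith

def IsBadlyApproximable (S : Subring K) (κ : ℝ) (z : K) : Prop :=
  ∀ x ∈ S, ∀ y ∈ S, y ≠ 0 → κ * ‖y‖ ^ (-2 : ℤ) ≤ ‖z - x / y‖

theorem IsBadlyApproximable.mono {S : Subring K} {κ κ' : ℝ} {z : K}
    (h : IsBadlyApproximable S κ z) (hκ : κ' ≤ κ) : IsBadlyApproximable S κ' z :=
  fun x hx y hy hy0 => (mul_le_mul_of_nonneg_right hκ (by positivity)).trans (h x hx y hy hy0)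

theorem mul_zpow_neg_two_le_norm_sub_div {x y z : K} {κ : ℝ} (hy0 : y ≠ 0)
    (h : κ ≤ ‖y‖ * ‖x - z * y‖) : κ * ‖y‖ ^ (-2 : ℤ) ≤ ‖z - x / y‖ := by
  rw [norm_sub_rev, show x / y - z = (x - z * y) / y by field_simp, norm_div, zpow_neg,
    zpow_two]
  calc κ * (‖y‖ * ‖y‖)⁻¹ ≤ ‖y‖ * ‖x - z * y‖ * (‖y‖ * ‖y‖)⁻¹ := by gcongr
    _ = ‖x - z * y‖ / ‖y‖ := by field_simp

theorem isBadlyApproximable_of_convergents {S : Subring K} (hS : ∀ x ∈ S, x ≠ 0 → 1 ≤ ‖x‖)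
    {p q : ℕ → K} (hpS : ∀ n, p n ∈ S) (hqS : ∀ n, q n ∈ S) (hp0 : p 0 = 1) (hq0 : q 0 = 0)
    (hdet : ∀ n, (p (n + 1) * q n - p n * q (n + 1)) ^ 2 = 1) {z : K} {c C : ℝ}
    (hc₀ : 0 ≤ c) (hc : c * (1 + c) ≤ 1)
    (hdecay : ∀ n, ‖p (n + 1) - z * q (n + 1)‖ ≤ c * ‖p n - z * q n‖)
    (hgrowth : ∀ n, ‖p n - z * q n‖ ≤ C * ‖p (n + 1) - z * q (n + 1)‖) :
    IsBadlyApproximable S (1 / (2 * max C 4)) z := by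
  intro x hx y hy hy0
  set E : ℕ → ℝ := fun n => ‖p n - z * q n‖ with hE
  set B : ℝ := (2 * ‖y‖)⁻¹ with hB
  have hy1 : 1 ≤ ‖y‖ := hS y hy hy0
  have hEc : ∀ n, E n ≤ c ^ n := by
    intro n
    induction n with
    | zero => simp [hE, hp0, hq0]
    | succ n ih => rw [pow_succ']; exact (hdecay n).trans (by gcongr)
  obtain ⟨N, hN⟩ := exists_pow_lt_of_lt_one (show 0 < B by positivity) (show c < 1 by nlinarith)
  obtain ⟨m, hm1, hm⟩ : ∃ m, E (m + 1) < B ∧ B ≤ E m :=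
    Nat.exists_succ_lt_and_le
      (by simp only [hE, hp0, hq0, mul_zero, sub_zero, norm_one]
          exact inv_le_one_of_one_le₀ (by linarith))
      ⟨N, (hEc N).trans_lt hN⟩
  have hqE : ∀ n, ‖q n‖ * E n ≤ 1 := norm_mul_norm_le_one hc₀ hc hq0 (fun n => by
    rw [← (isOfFinOrder_iff_pow_eq_one.2 ⟨2, two_pos, hdet n⟩).norm_eq_one, ← norm_neg]
    congr 1
    ring) hdecay
  have hqe : ‖q m‖ * E (m + 1) ≤ 1 :=
    (mul_le_mul_of_nonneg_left ((hdecay m).trans (mul_le_of_le_one_left (norm_nonneg _)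
      (by nlinarith))) (norm_nonneg _)).trans (hqE m)
  have hye : 2 * ‖y‖ * E (m + 1) ≤ 1 := by
    rw [← mul_inv_cancel₀ (by positivity : 2 * ‖y‖ ≠ 0)]
    exact (mul_lt_mul_of_pos_left hm1 (by positivity)).le
  have hmin := min_le_norm_sub_mul_of_sq_det_eq_one hS (hpS m) (hpS (m + 1)) (hqS m)
    (hqS (m + 1)) (hdet m) hqe hx hy hy0 hye
  have hL : B / max C 4 ≤ ‖x - z * y‖ := by
    refine (le_min ?_ ?_).trans hmin
    · rw [div_le_iff₀ (by positivity)]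
      exact hm.trans ((hgrowth m).trans (by rw [mul_comm]; gcongr; exact le_max_left _ _))
    · calc B / max C 4 ≤ B / 4 := by gcongr; exact le_max_right _ _
        _ ≤ E m / 4 := by gcongr
  refine mul_zpow_neg_two_le_norm_sub_div hy0 ?_
  calc 1 / (2 * max C 4) = ‖y‖ * (B / max C 4) := by rw [hB]; field_simp
    _ ≤ ‖y‖ * ‖x - z * y‖ := by gcongr

end Approximation

theorem eisenstein_cf_badly_approximable_of_bounded_general
    (z : ℂ) (a zs : ℕ → ℂ)
    (ha : ∀ n, IsEis (a n))
    (hz0 : zs 0 = z)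
    (hnear : ∀ n, ∀ b : ℂ, IsEis b → ‖zs n - a n‖ ≤ ‖zs n - b‖)
    (hne : ∀ n, zs n ≠ a n)
    (hit : ∀ n, zs (n + 1) = (zs n - a n)⁻¹)
    (p q : ℕ → ℂ)
    (hp0 : p 0 = 1) (hp1 : p 1 = a 0)
    (hprec : ∀ n, p (n + 2) = a (n + 1) * p (n + 1) + p n)
    (hq0 : q 0 = 0) (hq1 : q 1 = 1)
    (hqrec : ∀ n, q (n + 2) = a (n + 1) * q (n + 1) + q n)
    (M : ℝ) (haM : ∀ n, ‖a n‖ ≤ M)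
    :
    ∀ pp qq : ℂ, IsEis pp → IsEis qq → qq ≠ 0 →
      (1 / (2 * (M + 2) ^ 2)) * ‖qq‖ ^ (-2 : ℤ) ≤
        ‖z - pp / qq‖ := by
  have hstep : ∀ n, ‖zs n - a n‖ ≤ (√3)⁻¹ := fun n => by
    obtain ⟨b, hb, hwb⟩ := exists_isEis_norm_sub_le (zs n)
    exact (hnear n b hb).trans hwb
  have hinv_sqrt_three_le_one : (√3)⁻¹ ≤ (1 : ℝ) := inv_le_one_of_one_le₀ (by simp)
  have herr : ∀ n, p (n + 1) - z * q (n + 1) = -(zs n - a n) * (p n - z * q n) :=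
    succ_eq_neg_sub_mul_of_recurrence (e := fun n => p n - z * q n)
      (fun n => by rw [hprec, hqrec]; ring)
      (by rw [hp0, hp1, hq0, hq1, hz0]; ring) hne hit
  have hgrowth : ∀ n, ‖p n - z * q n‖ ≤ (M + 1) * ‖p (n + 1) - z * q (n + 1)‖ := fun n => by
    rw [norm_eq_norm_mul_norm_succ (e := fun n => p n - z * q n) hne hit herr n]
    gcongr
    calc ‖zs (n + 1)‖ ≤ ‖zs (n + 1) - a (n + 1)‖ + ‖a (n + 1)‖ := norm_le_norm_sub_add _ _
      _ ≤ 1 + M := add_le_add ((hstep _).trans hinv_sqrt_three_le_one) (haM _)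
      _ = M + 1 := add_comm _ _
  have hM : 0 ≤ M := (norm_nonneg _).trans (haM 0)
  have hbad := isBadlyApproximable_of_convergents (S := eisSubring) (z := z)
    (fun x hx hx0 => IsEis.one_le_norm hx hx0)
    (eisSubring.mem_of_recurrence ha (hp0 ▸ one_mem _) (hp1 ▸ ha 0) hprec)
    (eisSubring.mem_of_recurrence ha (hq0 ▸ zero_mem _) (hq1 ▸ one_mem _) hqrec) hp0 hq0
    (fun n => by simp [casoratian_eq hprec hqrec, hp0, hp1, hq0, hq1, ← pow_mul, pow_mul'])
    (by positivity) inv_sqrt_three_mul_one_add_le_one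
    (fun n => by rw [herr, norm_mul, norm_neg]; gcongr; exact hstep n) hgrowth
  have hκ : 1 / (2 * (M + 2) ^ 2) ≤ 1 / (2 * max (M + 1) 4) := by
    gcongr
    exact max_le (by nlinarith) (by nlinarith)
  exact fun pp qq hpp hqq hqq0 => hbad.mono hκ pp hpp qq hqq hqq0

/-- If |aₙ| ≤ M for all n, then for all Eisenstein integers p, q with q ≠ 0,
|z − p/q| ≥ (1/(2·(M + 2)²))·|q|⁻². -/
theorem eisenstein_cf_badly_approximable_of_bounded
    (z : ℂ) (a zs : ℕ → ℂ)
    (ha : ∀ n, IsEis (a n))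
    (hz0 : zs 0 = z)
    (hnear : ∀ n, ∀ b : ℂ, IsEis b → ‖zs n - a n‖ ≤ ‖zs n - b‖)
    (hne : ∀ n, zs n ≠ a n)
    (hit : ∀ n, zs (n + 1) = (zs n - a n)⁻¹)
    (p q : ℕ → ℂ)
    (hp0 : p 0 = 1) (hp1 : p 1 = a 0)
    (hprec : ∀ n, p (n + 2) = a (n + 1) * p (n + 1) + p n)
    (hq0 : q 0 = 0) (hq1 : q 1 = 1)
    (hqrec : ∀ n, q (n + 2) = a (n + 1) * q (n + 1) + q n)
    (hqne : ∀ n, q (n + 1) ≠ 0)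
    (M : ℝ) (hM : 0 < M) (haM : ∀ n, ‖a n‖ ≤ M)
    :
    ∀ pp qq : ℂ, IsEis pp → IsEis qq → qq ≠ 0 →
      (1 / (2 * (M + 2) ^ 2)) * ‖qq‖ ^ (-2 : ℤ) ≤
        ‖z - pp / qq‖ :=
  eisenstein_cf_badly_approximable_of_bounded_general z a zs ha hz0 hnear hne hit p q hp0 hp1 hprec
    hq0 hq1 hqrec M haM
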